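/- For all 0 < δ < 1 and 0 < δ' < 1 there exists a constant C₁ = C₁(δ, δ') > 0 such that for all a, b, z in the unit disc 𝔻 with |a| ≤ δ', |b| ≤ δ' and |z| ≤ δ, the hyperbolic distance satisfies [T_a(z), T_b(z)] ≤ C₁ · [a, b], where T_a(z) = (a+z)/(1+ā z). -/

import Mathlib

/- Statement 7: For all 0 < δ < 1 and 0 < δ' < 1 there exists C₁ = C₁(δ, δ') > 0 such that
for all a, b, z in the unit disc 𝔻 with |a| ≤ δ', |b| ≤ δ' and |z| ≤ δ, the hyperbolic
distance satisfies [T_a(z), T_b(z)] ≤ C₁ · [a, b], where T_a(z) = (a+z)/(1+ā z). -/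

open Complex

/-- The Möbius transformation `T_a(z) = (a + z) / (1 + ā z)` of the unit disc. -/
noncomputable def Tmob (a z : ℂ) : ℂ := (a + z) / (1 + (starRingEnd ℂ) a * z)

/-- The hyperbolic (Poincaré) distance on the unit disc:
`[a, b] = log ((1 + t) / (1 - t))` where `t = |(a - b) / (1 - ā b)|`
(this equals `2 artanh t`). -/
noncomputable def hypDist (a b : ℂ) : ℝ :=
  Real.log ((1 + ‖((a - b) / (1 - (starRingEnd ℂ) a * b))‖) /
    (1 - ‖((a - b) / (1 - (starRingEnd ℂ) a * b))‖))

/-! The Poincaré distance is `log ((1 + ρ) / (1 - ρ))` of the pseudo-hyperbolic distance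
`ρ(u, v) = |u - v| / |1 - ū v|`, and the identity `|1 - ū v|² = |u - v|² + (1 - |u|²)(1 - |v|²)`
gives `1 - ρ(u, v)² = (1 - |u|²)(1 - |v|²) / |1 - ū v|²`. So on a subdisc `1 - |u|² ≥ m` the
quantity `ρ` stays away from `1`, and the Poincaré distance is squeezed between `|u - v| / 2` and a
constant times `|u - v|`. Since `|T_a z| = ρ(-a, z)`, the points `T_a z`, `T_b z` lie in such a
subdisc, and `a ↦ T_a z` is Lipschitz there for the Euclidean metric; chaining these comparisons
gives the claim. -/

open ComplexConjugate

lemma Real.le_log_one_add_div_one_sub {t : ℝ} (ht0 : 0 ≤ t) (ht1 : t < 1) :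
    t ≤ Real.log ((1 + t) / (1 - t)) := by
  have h := Real.one_sub_inv_le_log_of_pos (show 0 < (1 + t) / (1 - t) by
    apply div_pos <;> linarith)
  rw [inv_div, one_sub_div (by linarith)] at h
  refine le_trans ?_ h
  rw [le_div_iff₀ (by linarith)]
  nlinarith

lemma Real.log_one_add_div_one_sub_le {t : ℝ} (ht0 : 0 ≤ t) (ht1 : t < 1) :
    Real.log ((1 + t) / (1 - t)) ≤ 2 * t / (1 - t) := by
  have h := Real.log_le_sub_one_of_pos (show 0 < (1 + t) / (1 - t) by
    apply div_pos <;> linarith)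
  rwa [div_sub_one (by linarith), show 1 + t - (1 - t) = 2 * t by ring] at h

lemma Complex.normSq_one_sub_conj_mul (u v : ℂ) :
    normSq (1 - conj u * v) = normSq (u - v) + (1 - normSq u) * (1 - normSq v) := by
  simp only [normSq_apply, sub_re, sub_im, mul_re, mul_im, one_re, one_im, conj_re, conj_im]
  ring

lemma Complex.norm_one_sub_conj_mul_le_two {u v : ℂ} (hu : ‖u‖ ≤ 1) (hv : ‖v‖ ≤ 1) :
    ‖1 - conj u * v‖ ≤ 2 := by
  calc ‖1 - conj u * v‖ ≤ 1 + ‖u‖ * ‖v‖ := by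
        simpa [norm_mul] using norm_sub_le (1 : ℂ) (conj u * v)
    _ ≤ 2 := by nlinarith [norm_nonneg u]

lemma Complex.normSq_one_sub_conj_mul_le_four {u v : ℂ} (hu : ‖u‖ ≤ 1) (hv : ‖v‖ ≤ 1) :
    normSq (1 - conj u * v) ≤ 4 := by
  have h := norm_one_sub_conj_mul_le_two hu hv
  rw [← Complex.sq_norm]
  nlinarith [norm_nonneg (1 - conj u * v)]

lemma Complex.normSq_one_sub_conj_mul_pos {u v : ℂ} (hu : normSq u < 1) (hv : normSq v < 1) :
    0 < normSq (1 - conj u * v) := by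
  rw [normSq_one_sub_conj_mul]
  have := mul_pos (sub_pos.2 hu) (sub_pos.2 hv)
  linarith [normSq_nonneg (u - v)]

lemma Complex.normSq_lt_one_iff {u : ℂ} : normSq u < 1 ↔ ‖u‖ < 1 := by
  rw [← Complex.sq_norm, pow_lt_one_iff_of_nonneg (norm_nonneg u) two_ne_zero]

noncomputable def pseudoDist (u v : ℂ) : ℝ := ‖(u - v) / (1 - conj u * v)‖

lemma pseudoDist_nonneg (u v : ℂ) : 0 ≤ pseudoDist u v := norm_nonneg _

lemma hypDist_eq_log_pseudoDist (u v : ℂ) :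
    hypDist u v = Real.log ((1 + pseudoDist u v) / (1 - pseudoDist u v)) := rfl

lemma one_sub_pseudoDist_sq {u v : ℂ} (hu : normSq u < 1) (hv : normSq v < 1) :
    1 - pseudoDist u v ^ 2 = (1 - normSq u) * (1 - normSq v) / normSq (1 - conj u * v) := by
  have hpos := Complex.normSq_one_sub_conj_mul_pos hu hv
  rw [pseudoDist, norm_div, div_pow, Complex.sq_norm, Complex.sq_norm, one_sub_div hpos.ne',
    Complex.normSq_one_sub_conj_mul]
  ring

lemma pseudoDist_lt_one {u v : ℂ} (hu : normSq u < 1) (hv : normSq v < 1) :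
    pseudoDist u v < 1 := by
  have h := one_sub_pseudoDist_sq hu hv
  have : 0 < 1 - pseudoDist u v ^ 2 := by
    rw [h]
    exact div_pos (mul_pos (sub_pos.2 hu) (sub_pos.2 hv))
      (Complex.normSq_one_sub_conj_mul_pos hu hv)
  nlinarith [pseudoDist_nonneg u v]

lemma norm_sub_le_two_mul_hypDist {u v : ℂ} (hu : ‖u‖ < 1) (hv : ‖v‖ < 1) :
    ‖u - v‖ ≤ 2 * hypDist u v := by
  have hu' := Complex.normSq_lt_one_iff.2 hu
  have hv' := Complex.normSq_lt_one_iff.2 hv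
  have hden : 0 < ‖1 - conj u * v‖ :=
    norm_pos_iff.2 (Complex.normSq_pos.1 (Complex.normSq_one_sub_conj_mul_pos hu' hv'))
  have hρ : ‖u - v‖ ≤ 2 * pseudoDist u v := by
    rw [pseudoDist, norm_div, mul_div_assoc', le_div_iff₀ hden]
    nlinarith [norm_nonneg (u - v), Complex.norm_one_sub_conj_mul_le_two hu.le hv.le]
  have := Real.le_log_one_add_div_one_sub (pseudoDist_nonneg u v) (pseudoDist_lt_one hu' hv')
  rw [hypDist_eq_log_pseudoDist]
  linarith

lemma hypDist_le_of_le_one_sub_normSq {u v : ℂ} {m : ℝ} (hm : 0 < m)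
    (hu : m ≤ 1 - normSq u) (hv : m ≤ 1 - normSq v) :
    hypDist u v ≤ 16 * ‖u - v‖ / m ^ 3 := by
  have hu' : normSq u < 1 := by linarith
  have hv' : normSq v < 1 := by linarith
  have hprod : m ^ 2 ≤ (1 - normSq u) * (1 - normSq v) := by
    rw [sq]; exact mul_le_mul hu hv hm.le (by linarith)
  have hden : m ≤ ‖1 - conj u * v‖ := by
    apply le_of_sq_le_sq _ (norm_nonneg _)
    rw [Complex.sq_norm, Complex.normSq_one_sub_conj_mul]
    linarith [normSq_nonneg (u - v)]
  have hρ : pseudoDist u v ≤ ‖u - v‖ / m := by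
    rw [pseudoDist, norm_div]; gcongr
  -- `1 - ρ ≥ (1 - ρ²) / 2` as `ρ < 1`
  have hgap : m ^ 2 / 8 ≤ 1 - pseudoDist u v := by
    have h := one_sub_pseudoDist_sq hu' hv'
    have h1 : m ^ 2 / 4 ≤ 1 - pseudoDist u v ^ 2 := by
      rw [h]
      calc m ^ 2 / 4 ≤ (1 - normSq u) * (1 - normSq v) / 4 := by gcongr
        _ ≤ _ := div_le_div_of_nonneg_left (by positivity)
            (Complex.normSq_one_sub_conj_mul_pos hu' hv')
            (Complex.normSq_one_sub_conj_mul_le_four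
              (Complex.normSq_lt_one_iff.1 hu').le (Complex.normSq_lt_one_iff.1 hv').le)
    nlinarith [pseudoDist_nonneg u v, pseudoDist_lt_one hu' hv']
  rw [hypDist_eq_log_pseudoDist]
  calc _ ≤ 2 * pseudoDist u v / (1 - pseudoDist u v) :=
        Real.log_one_add_div_one_sub_le (pseudoDist_nonneg u v) (pseudoDist_lt_one hu' hv')
    _ ≤ 2 * (‖u - v‖ / m) / (m ^ 2 / 8) := by gcongr
    _ = 16 * ‖u - v‖ / m ^ 3 := by field_simp; ring

lemma norm_Tmob (a z : ℂ) : ‖Tmob a z‖ = pseudoDist (-a) z := by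
  rw [pseudoDist, Tmob, map_neg, neg_mul, sub_neg_eq_add, ← neg_add', neg_div, norm_neg]

lemma le_one_sub_normSq_Tmob {a z : ℂ} {r s : ℝ} (ha : ‖a‖ ≤ r) (hz : ‖z‖ ≤ s)
    (hr : r < 1) (hs : s < 1) :
    (1 - r ^ 2) * (1 - s ^ 2) / 4 ≤ 1 - normSq (Tmob a z) := by
  have ha1 : ‖-a‖ < 1 := by rw [norm_neg]; linarith
  have hz1 : ‖z‖ < 1 := by linarith
  have ha' := Complex.normSq_lt_one_iff.2 ha1
  have hz' := Complex.normSq_lt_one_iff.2 hz1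
  have har : normSq a ≤ r ^ 2 := by
    rw [← Complex.sq_norm]; exact pow_le_pow_left₀ (norm_nonneg a) ha 2
  have hzs : normSq z ≤ s ^ 2 := by
    rw [← Complex.sq_norm]; exact pow_le_pow_left₀ (norm_nonneg z) hz 2
  rw [← Complex.sq_norm, norm_Tmob, one_sub_pseudoDist_sq ha' hz', normSq_neg]
  rw [normSq_neg] at ha'
  calc (1 - r ^ 2) * (1 - s ^ 2) / 4 ≤ (1 - normSq a) * (1 - normSq z) / 4 := by
        have : 0 ≤ 1 - s ^ 2 := by nlinarith [norm_nonneg z]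
        gcongr
    _ ≤ _ := div_le_div_of_nonneg_left (mul_nonneg (by linarith) (by linarith))
        (Complex.normSq_one_sub_conj_mul_pos (by rwa [normSq_neg]) hz')
        (Complex.normSq_one_sub_conj_mul_le_four ha1.le hz1.le)

lemma one_sub_mul_le_norm_one_add_conj_mul {a z : ℂ} {r s : ℝ} (ha : ‖a‖ ≤ r) (hz : ‖z‖ ≤ s) :
    1 - r * s ≤ ‖1 + conj a * z‖ := by
  have h : ‖conj a * z‖ ≤ r * s := by
    rw [norm_mul, Complex.norm_conj]
    exact mul_le_mul ha hz (norm_nonneg z) ((norm_nonneg a).trans ha)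
  have := norm_sub_norm_le (1 : ℂ) (-(conj a * z))
  rw [sub_neg_eq_add, norm_neg, norm_one] at this
  linarith

lemma Tmob_sub_Tmob {a b z : ℂ} (ha : 1 + conj a * z ≠ 0) (hb : 1 + conj b * z ≠ 0) :
    Tmob a z - Tmob b z =
      ((a - b) * (1 + conj b * z) - (b + z) * (conj a - conj b) * z) /
        ((1 + conj a * z) * (1 + conj b * z)) := by
  rw [Tmob, Tmob, div_sub_div _ _ ha hb]
  ring

lemma norm_Tmob_sub_Tmob_le {a b z : ℂ} {r s : ℝ} (ha : ‖a‖ ≤ r) (hb : ‖b‖ ≤ r) (hz : ‖z‖ ≤ s)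
    (hr : r < 1) (hs : s < 1) :
    ‖Tmob a z - Tmob b z‖ ≤ 4 * ‖a - b‖ / (1 - r * s) ^ 2 := by
  have hrs : 0 < 1 - r * s := by
    nlinarith [(norm_nonneg a).trans ha, (norm_nonneg z).trans hz]
  have hA := one_sub_mul_le_norm_one_add_conj_mul ha hz
  have hB := one_sub_mul_le_norm_one_add_conj_mul hb hz
  have hb1 : ‖b‖ ≤ 1 := by linarith
  have hz1 : ‖z‖ ≤ 1 := by linarith
  have hnum : ‖(a - b) * (1 + conj b * z) - (b + z) * (conj a - conj b) * z‖ ≤ 4 * ‖a - b‖ := by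
    have h1 : ‖1 + conj b * z‖ ≤ 2 := by
      calc _ ≤ 1 + ‖b‖ * ‖z‖ := by
            simpa [norm_mul] using norm_add_le (1 : ℂ) (conj b * z)
        _ ≤ 2 := by nlinarith [norm_nonneg b]
    have h2 : ‖b + z‖ ≤ 2 := by linarith [norm_add_le b z]
    have h3 : ‖conj a - conj b‖ = ‖a - b‖ := by rw [← map_sub, Complex.norm_conj]
    calc _ ≤ ‖a - b‖ * ‖1 + conj b * z‖ + ‖b + z‖ * ‖a - b‖ * ‖z‖ := by
          simpa only [norm_mul, h3] using
            norm_sub_le ((a - b) * (1 + conj b * z)) ((b + z) * (conj a - conj b) * z)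
      _ ≤ ‖a - b‖ * 2 + 2 * ‖a - b‖ * 1 := by gcongr
      _ = 4 * ‖a - b‖ := by ring
  rw [Tmob_sub_Tmob (norm_pos_iff.1 (hrs.trans_le hA)) (norm_pos_iff.1 (hrs.trans_le hB)),
    norm_div, norm_mul, sq]
  calc _ ≤ 4 * ‖a - b‖ / (‖1 + conj a * z‖ * ‖1 + conj b * z‖) := by gcongr
    _ ≤ _ := by gcongr

theorem hypDist_Tmob_le (δ δ' : ℝ)
    (hδ0 : 0 < δ) (hδ1 : δ < 1) (hδ'0 : 0 < δ') (hδ'1 : δ' < 1) :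
    ∃ C₁ > (0 : ℝ), ∀ a b z : ℂ,
      ‖a‖ ≤ δ' → ‖b‖ ≤ δ' → ‖z‖ ≤ δ →
        hypDist (Tmob a z) (Tmob b z) ≤ C₁ * hypDist a b := by
  set m := (1 - δ' ^ 2) * (1 - δ ^ 2) / 4
  have hm : 0 < m := by
    have : 0 < 1 - δ' ^ 2 := by nlinarith
    have : 0 < 1 - δ ^ 2 := by nlinarith
    positivity
  have hε : 0 < 1 - δ' * δ := by nlinarith
  refine ⟨128 / ((1 - δ' * δ) ^ 2 * m ^ 3), by positivity, fun a b z ha hb hz => ?_⟩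
  have hab := norm_sub_le_two_mul_hypDist (ha.trans_lt hδ'1) (hb.trans_lt hδ'1)
  calc hypDist (Tmob a z) (Tmob b z) ≤ 16 * ‖Tmob a z - Tmob b z‖ / m ^ 3 :=
        hypDist_le_of_le_one_sub_normSq hm (le_one_sub_normSq_Tmob ha hz hδ'1 hδ1)
          (le_one_sub_normSq_Tmob hb hz hδ'1 hδ1)
    _ ≤ 16 * (4 * (2 * hypDist a b) / (1 - δ' * δ) ^ 2) / m ^ 3 := by
        grw [norm_Tmob_sub_Tmob_le ha hb hz hδ'1 hδ1, hab]
    _ = 128 / ((1 - δ' * δ) ^ 2 * m ^ 3) * hypDist a b := by field_simp; ring
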